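/- Let L be an even hyperbolic lattice with positive cone P_L, and let V ⊆ {v ∈ L∨ : v² < 0} satisfy condition [V1]. Then the family of hyperplanes V* = {(v)⊥ : v ∈ V} is locally finite in P_L: for every compact subset J ⊆ P_L, the set of hyperplanes {(v)⊥ : v ∈ V, (v)⊥ ∩ J ≠ ∅} is finite. -/

import Mathlib

namespace K3Aut

variable {n : ℕ}

/-- The real symmetric bilinear pairing on `L ⊗ ℝ = ℝⁿ` determined by an
integral Gram matrix `B`. -/
def pair (B : Matrix (Fin n) (Fin n) ℤ) (x y : Fin n → ℝ) : ℝ :=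
  ∑ i, ∑ j, x i * (B i j : ℝ) * y j

/-- `x` is a point of the lattice `L` (integer coordinates). -/
def isLat (x : Fin n → ℝ) : Prop := ∀ i, ∃ k : ℤ, x i = (k : ℝ)

/-- `x` has rational coordinates (a point of `L ⊗ ℚ`). -/
def isRatPt (x : Fin n → ℝ) : Prop := ∀ i, ∃ q : ℚ, x i = (q : ℝ)

/-- `x` is a point of the dual lattice `L∨ ⊆ L ⊗ ℚ`. -/
def isDual (B : Matrix (Fin n) (Fin n) ℤ) (x : Fin n → ℝ) : Prop :=
  isRatPt x ∧ ∀ y : Fin n → ℝ, isLat y → ∃ k : ℤ, pair B x y = (k : ℝ)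

/-- The Gram matrix `B` is symmetric, nondegenerate and even. -/
def IsEvenLat (B : Matrix (Fin n) (Fin n) ℤ) : Prop :=
  B.IsSymm ∧ B.det ≠ 0 ∧ ∀ i, Even (B i i)

/-- The form restricted to the subspace `W` is nondegenerate with exactly one
positive direction, i.e. of signature `(1, dim W - 1)`. -/
def IsHypOn (B : Matrix (Fin n) (Fin n) ℤ) (W : Submodule ℝ (Fin n → ℝ)) : Prop :=
  (∃ x ∈ W, 0 < pair B x x) ∧
  (∀ x ∈ W, ∀ y ∈ W, 0 < pair B x x → 0 < pair B y y →
      pair B x x * pair B y y ≤ pair B x y ^ 2) ∧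
  (∀ x ∈ W, (∀ y ∈ W, pair B x y = 0) → x = 0)

/-- The lattice is hyperbolic: rank `n > 1` and signature `(1, n-1)`. -/
def IsHyperbolic (B : Matrix (Fin n) (Fin n) ℤ) : Prop :=
  1 < n ∧ IsHypOn B ⊤

/-- `P` is a positive cone: a connected component of the set of positive-norm
vectors of `L ⊗ ℝ`. -/
def IsPosCone (B : Matrix (Fin n) (Fin n) ℤ) (P : Set (Fin n → ℝ)) : Prop :=
  ∃ x, 0 < pair B x x ∧ P = connectedComponentIn {y | 0 < pair B y y} x

/-- The hyperplane `(v)⊥` of `P`. -/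
def perp (B : Matrix (Fin n) (Fin n) ℤ) (P : Set (Fin n → ℝ)) (v : Fin n → ℝ) :
    Set (Fin n → ℝ) := {x ∈ P | pair B x v = 0}

/-- `V ⊆ {v ∈ L∨ : v² < 0}`. -/
def DualNeg (B : Matrix (Fin n) (Fin n) ℤ) (V : Set (Fin n → ℝ)) : Prop :=
  ∀ v ∈ V, isDual B v ∧ pair B v v < 0

/-- Condition [V1]: the norms of the vectors of `V` are bounded. -/
def CondV1 (B : Matrix (Fin n) (Fin n) ℤ) (V : Set (Fin n → ℝ)) : Prop :=
  ∃ c : ℝ, 0 < c ∧ ∀ v ∈ V, -pair B v v < c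

/-- The cone `Σ_L(Δ)`. -/
def SigmaCone (B : Matrix (Fin n) (Fin n) ℤ) (Δ : Set (Fin n → ℝ)) :
    Set (Fin n → ℝ) :=
  {x | ∀ v ∈ Δ, 0 ≤ pair B x v}

/-- `D` is a `V*`-chamber: the closure in `P` of a connected component of the
complement in `P` of the hyperplanes `(v)⊥`, `v ∈ V`. -/
def IsChamber (B : Matrix (Fin n) (Fin n) ℤ) (P V D : Set (Fin n → ℝ)) : Prop :=
  ∃ x ∈ P, (∀ v ∈ V, pair B x v ≠ 0) ∧
    D = closure (connectedComponentIn {y ∈ P | ∀ v ∈ V, pair B y v ≠ 0} x) ∩ P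

/-- `Δ` is a defining set of the chamber `D`. -/
def IsDefSet (B : Matrix (Fin n) (Fin n) ℤ) (P Δ D : Set (Fin n → ℝ)) : Prop :=
  (∀ v ∈ Δ, isDual B v ∧ pair B v v < 0) ∧ D = SigmaCone B Δ ∩ P

/-- Condition [V3]: every `V*`-chamber has a finite defining set. -/
def CondV3 (B : Matrix (Fin n) (Fin n) ℤ) (P V : Set (Fin n → ℝ)) : Prop :=
  ∀ D, IsChamber B P V D → ∃ Δ : Set (Fin n → ℝ), Δ.Finite ∧ IsDefSet B P Δ D

/-- Condition [V4]: every boundary point of a `V*`-chamber is rational, i.e.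
every nonzero norm-zero vector of the closure of a chamber is a positive real
multiple of a rational vector. -/
def CondV4 (B : Matrix (Fin n) (Fin n) ℤ) (P V : Set (Fin n → ℝ)) : Prop :=
  ∀ D, IsChamber B P V D → ∀ x ∈ closure D, x ≠ 0 → pair B x x = 0 →
    ∃ t : ℝ, 0 < t ∧ ∃ y, isRatPt y ∧ x = t • y

/-- The action of `GL_n(ℤ)` on `L ⊗ ℝ`. -/
def act (g : (Matrix (Fin n) (Fin n) ℤ)ˣ) (x : Fin n → ℝ) : Fin n → ℝ :=
  ((g : Matrix (Fin n) (Fin n) ℤ).map ((↑) : ℤ → ℝ)).mulVec x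

/-- `g` is an isometry of `L` preserving the positive cone `P`,
i.e. an element of `O⁺(L)`. -/
def InOPlus (B : Matrix (Fin n) (Fin n) ℤ) (P : Set (Fin n → ℝ))
    (g : (Matrix (Fin n) (Fin n) ℤ)ˣ) : Prop :=
  (g : Matrix (Fin n) (Fin n) ℤ).transpose * B * (g : Matrix (Fin n) (Fin n) ℤ) = B ∧
    act g '' P = P

/-- Condition [V2]: `V` is invariant under the action of `G`. -/
def CondV2 (G : Subgroup ((Matrix (Fin n) (Fin n) ℤ)ˣ)) (V : Set (Fin n → ℝ)) : Prop :=
  ∀ g ∈ G, ∀ v ∈ V, act g v ∈ V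

/-- `(v)⊥` is a wall of the chamber `D`: it is disjoint from the interior of `D`
and `(v)⊥ ∩ D` contains a nonempty open subset of `(v)⊥`. -/
def IsWall (B : Matrix (Fin n) (Fin n) ℤ) (P : Set (Fin n → ℝ)) (v : Fin n → ℝ)
    (D : Set (Fin n → ℝ)) : Prop :=
  pair B v v < 0 ∧ perp B P v ∩ interior D = ∅ ∧
  ∃ W : Set (Fin n → ℝ), IsOpen W ∧ (W ∩ perp B P v).Nonempty ∧ W ∩ perp B P v ⊆ D

/-- `D'` is the chamber adjacent to `D` across the wall `(v)⊥`. -/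
def IsAdjacent (B : Matrix (Fin n) (Fin n) ℤ) (P V : Set (Fin n → ℝ))
    (D : Set (Fin n → ℝ)) (v : Fin n → ℝ) (D' : Set (Fin n → ℝ)) : Prop :=
  IsChamber B P V D' ∧ D' ≠ D ∧
  ∃ W : Set (Fin n → ℝ), IsOpen W ∧ (W ∩ perp B P v).Nonempty ∧
    W ∩ perp B P v ⊆ D ∩ D'

/-- `S` is (the set of real points of) a primitive sublattice of `L`. -/
def IsPrimSub (S : Submodule ℤ (Fin n → ℝ)) : Prop :=
  (∀ x ∈ S, isLat x) ∧
  ∀ x : Fin n → ℝ, isLat x → ∀ k : ℤ, k ≠ 0 → (k : ℝ) • x ∈ S → x ∈ S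

/-- `xS` is the orthogonal projection of `x` to `S ⊗ ℚ`. -/
def IsProjS (B : Matrix (Fin n) (Fin n) ℤ) (S : Submodule ℤ (Fin n → ℝ))
    (xS x : Fin n → ℝ) : Prop :=
  xS ∈ Submodule.span ℚ (S : Set (Fin n → ℝ)) ∧ ∀ s ∈ S, pair B (x - xS) s = 0

/-- The orthogonal complement `R = S⊥ ∩ L` of `S` in `L`. -/
def orthCompl (B : Matrix (Fin n) (Fin n) ℤ) (S : Submodule ℤ (Fin n → ℝ)) :
    Set (Fin n → ℝ) :=
  {x | isLat x ∧ ∀ s ∈ S, pair B x s = 0}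

/-- `P` is a positive cone of the subspace `W`. -/
def IsPosConeIn (B : Matrix (Fin n) (Fin n) ℤ) (W : Set (Fin n → ℝ))
    (P : Set (Fin n → ℝ)) : Prop :=
  ∃ x ∈ W, 0 < pair B x x ∧ P = connectedComponentIn {y ∈ W | 0 < pair B y y} x


/-
Every point of the compact set `J` has positive norm, so by hyperbolicity its
orthogonal complement is negative definite; by compactness it is so uniformly:
`-u² ≥ m ‖u‖²` whenever `u ⊥ x` for some `x ∈ J`, with one `m > 0`. Hence every `v ∈ V`
with `(v)⊥ ∩ J ≠ ∅` satisfies `m ‖v‖² ≤ -v² < c`, and these `v` form a bounded subset of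
`L∨`, which is a discrete subgroup of `L ⊗ ℝ` because the Gram matrix is invertible.
-/

section Pairing

variable (B : Matrix (Fin n) (Fin n) ℤ)

lemma pair_eq_toLinearMap₂' (x y : Fin n → ℝ) :
    pair B x y = Matrix.toLinearMap₂' ℝ (B.map (↑)) x y := by
  simp only [pair, Matrix.toLinearMap₂'_apply, Matrix.map_apply, smul_eq_mul]
  exact Finset.sum_congr rfl fun _ _ => Finset.sum_congr rfl fun _ _ => by ring

lemma pair_add_left (x y z : Fin n → ℝ) : pair B (x + y) z = pair B x z + pair B y z := by
  simp [pair_eq_toLinearMap₂']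

lemma pair_add_right (x y z : Fin n → ℝ) : pair B x (y + z) = pair B x y + pair B x z := by
  simp [pair_eq_toLinearMap₂']

lemma pair_sub_right (x y z : Fin n → ℝ) : pair B x (y - z) = pair B x y - pair B x z := by
  simp [pair_eq_toLinearMap₂']

lemma pair_smul_left (a : ℝ) (x y : Fin n → ℝ) : pair B (a • x) y = a * pair B x y := by
  simp [pair_eq_toLinearMap₂']

lemma pair_smul_right (a : ℝ) (x y : Fin n → ℝ) : pair B x (a • y) = a * pair B x y := by
  simp [pair_eq_toLinearMap₂']

lemma continuous_pair : Continuous fun p : (Fin n → ℝ) × (Fin n → ℝ) => pair B p.1 p.2 := by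
  unfold pair
  fun_prop

lemma pair_single_one (v : Fin n → ℝ) (j : Fin n) :
    pair B v (Pi.single j 1) = Matrix.vecMul v (B.map (↑)) j := by
  simp [pair, Matrix.vecMul, dotProduct, Pi.single_apply]

end Pairing

lemma pair_comm {B : Matrix (Fin n) (Fin n) ℤ} (hs : B.IsSymm) (x y : Fin n → ℝ) :
    pair B x y = pair B y x := by
  rw [pair, Finset.sum_comm]
  exact Finset.sum_congr rfl fun j _ => Finset.sum_congr rfl fun i _ => by
    rw [hs.apply i j]; ring

lemma IsPosCone.pair_self_pos {B : Matrix (Fin n) (Fin n) ℤ} {P : Set (Fin n → ℝ)}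
    (hP : IsPosCone B P) {x : Fin n → ℝ} (hx : x ∈ P) : 0 < pair B x x := by
  obtain ⟨x₀, -, rfl⟩ := hP
  exact show x ∈ {y | 0 < pair B y y} from connectedComponentIn_subset _ _ hx

section Hyperbolic

variable {B : Matrix (Fin n) (Fin n) ℤ} {x v : Fin n → ℝ}

lemma pair_self_nonpos_of_orthogonal (hhyp : IsHypOn B ⊤) (hx : 0 < pair B x x)
    (hxv : pair B x v = 0) : pair B v v ≤ 0 := by
  by_contra! hv
  have hcs := hhyp.2.1 x trivial v trivial hx hv
  rw [hxv] at hcs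
  nlinarith

lemma pair_self_neg_of_orthogonal (hs : B.IsSymm) (hhyp : IsHypOn B ⊤) (hx : 0 < pair B x x)
    (hxv : pair B x v = 0) (hv : v ≠ 0) : pair B v v < 0 := by
  refine (pair_self_nonpos_of_orthogonal hhyp hx hxv).lt_of_ne fun hvv => ?_
  obtain ⟨z₀, hz₀⟩ : ∃ z₀, pair B v z₀ ≠ 0 := by
    by_contra! h
    exact hv (hhyp.2.2 v trivial fun y _ => h y)
  -- `z` is the projection of `z₀` to `x⊥`, rescaled by `x²`.
  set z := pair B x x • z₀ - pair B x z₀ • x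
  have hxz : pair B x z = 0 := by
    simp only [z, pair_sub_right, pair_smul_right]; ring
  have hvz : pair B v z ≠ 0 := by
    simp only [z, pair_sub_right, pair_smul_right, pair_comm hs v x, hxv]
    simpa using ⟨hx.ne', hz₀⟩
  have hzz := pair_self_nonpos_of_orthogonal hhyp hx hxz
  -- As `v² = 0` and `z² ≤ 0`, this vector of `x⊥` has norm `⟨v,z⟩² (2 - z²) > 0`.
  set u := (1 - pair B z z) • v + pair B v z • z
  have hxu : pair B x u = 0 := by
    simp only [u, pair_add_right, pair_smul_right, hxv, hxz]; ring
  have huu : pair B u u = pair B v z ^ 2 * (2 - pair B z z) := by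
    simp only [u, pair_add_left, pair_add_right, pair_smul_left, pair_smul_right,
      pair_comm hs z v, hvv]
    ring
  have huu_nonpos := pair_self_nonpos_of_orthogonal hhyp hx hxu
  rw [huu] at huu_nonpos
  exact huu_nonpos.not_gt (mul_pos (by positivity) (by linarith))

lemma exists_pos_mul_norm_sq_le_neg_pair_self (hs : B.IsSymm) (hhyp : IsHypOn B ⊤)
    {J : Set (Fin n → ℝ)} (hJ : IsCompact J) (hJpos : ∀ x ∈ J, 0 < pair B x x) :
    ∃ m > 0, ∀ x ∈ J, ∀ u, pair B x u = 0 → m * ‖u‖ ^ 2 ≤ -pair B u u := by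
  set C := (J ×ˢ Metric.sphere 0 1) ∩ {p | pair B p.1 p.2 = 0}
  have hC : IsCompact C :=
    (hJ.prod (isCompact_sphere 0 1)).inter_right (isClosed_eq (continuous_pair B) continuous_const)
  have hcont : Continuous fun p : (Fin n → ℝ) × (Fin n → ℝ) => -pair B p.2 p.2 :=
    ((continuous_pair B).comp (continuous_snd.prodMk continuous_snd)).neg
  have hpos : ∀ p ∈ C, 0 < -pair B p.2 p.2 := by
    rintro p ⟨⟨hp₁, hp₂⟩, hp⟩
    have hp₂ : p.2 ≠ 0 := ne_zero_of_mem_sphere one_ne_zero ⟨p.2, hp₂⟩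
    exact neg_pos.2 (pair_self_neg_of_orthogonal hs hhyp (hJpos _ hp₁) hp hp₂)
  obtain ⟨m, hm, hmC⟩ := hC.exists_forall_le' hcont.continuousOn hpos
  refine ⟨m, hm, fun x hx u hxu => ?_⟩
  rcases eq_or_ne u 0 with rfl | hu
  · simp [pair]
  have hnu : 0 < ‖u‖ := norm_pos_iff.2 hu
  have hmu := hmC (x, ‖u‖⁻¹ • u) ⟨⟨hx, by simp [norm_smul, hnu.ne']⟩, by simp [pair_smul_right, hxu]⟩
  simp only [pair_smul_left, pair_smul_right] at hmu
  calc m * ‖u‖ ^ 2 ≤ -(‖u‖⁻¹ * (‖u‖⁻¹ * pair B u u)) * ‖u‖ ^ 2 := by gcongr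
    _ = -pair B u u := by field_simp

end Hyperbolic

lemma finite_of_isBounded_of_forall_int {ι : Type*} [Fintype ι] {S : Set (ι → ℝ)}
    (hS : Bornology.IsBounded S) (hint : ∀ w ∈ S, ∀ i, ∃ k : ℤ, w i = k) : S.Finite := by
  set e : (ι → ℤ) → ι → ℝ := fun k i => k i
  have he : Topology.IsClosedEmbedding e := .piMap fun _ => Int.isClosedEmbedding_coe_real
  have hfin : (e ⁻¹' closure S).Finite :=
    (he.isCompact_preimage hS.isCompact_closure).finite_of_discrete
  refine (hfin.image e).subset fun w hw => ?_
  choose k hk using hint w hw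
  exact ⟨k, subset_closure (by simpa [e, ← funext hk] using hw), (funext hk).symm⟩

lemma finite_of_isBounded_of_isDual {B : Matrix (Fin n) (Fin n) ℤ} (hdet : B.det ≠ 0)
    {S : Set (Fin n → ℝ)} (hS : Bornology.IsBounded S) (hdual : ∀ v ∈ S, isDual B v) :
    S.Finite := by
  set f := Matrix.vecMulLinear (B.map ((↑) : ℤ → ℝ))
  have hf : Function.Injective f := by
    refine Matrix.vecMul_injective_iff_isUnit.2 ((Matrix.isUnit_iff_isUnit_det _).2 ?_)
    rw [← Int.cast_det]
    exact isUnit_iff_ne_zero.2 (Int.cast_ne_zero.2 hdet)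
  refine .of_finite_image (finite_of_isBounded_of_forall_int
    ((LinearMap.toContinuousLinearMap f).lipschitz.isBounded_image hS) ?_) hf.injOn
  rintro _ ⟨v, hv, rfl⟩ j
  obtain ⟨k, hk⟩ := (hdual v hv).2 (Pi.single j 1) fun i => by
    rcases eq_or_ne i j with rfl | h
    · exact ⟨1, by simp⟩
    · exact ⟨0, by simp [h]⟩
  exact ⟨k, by rw [← hk, pair_single_one]; rfl⟩

/-- Let `L` be an even hyperbolic lattice with positive cone
`P`, and let `V ⊆ {v ∈ L∨ : v² < 0}` satisfy condition [V1].  Then the family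
of hyperplanes `V* = {(v)⊥ : v ∈ V}` is locally finite in `P`: only finitely
many of these hyperplanes meet any given compact subset of `P`. -/
theorem statement_2 {n : ℕ} (B : Matrix (Fin n) (Fin n) ℤ)
    (hB : IsEvenLat B) (hhyp : IsHyperbolic B)
    (P : Set (Fin n → ℝ)) (hP : IsPosCone B P)
    (V : Set (Fin n → ℝ)) (hV : DualNeg B V) (hV1 : CondV1 B V) :
    ∀ J : Set (Fin n → ℝ), IsCompact J → J ⊆ P →
      {H : Set (Fin n → ℝ) | ∃ v ∈ V, H = perp B P v ∧ (H ∩ J).Nonempty}.Finite := by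
  intro J hJ hJP
  obtain ⟨hs, hdet, -⟩ := hB
  obtain ⟨c, -, hc⟩ := hV1
  obtain ⟨m, hm, hmJ⟩ := exists_pos_mul_norm_sq_le_neg_pair_self hs hhyp.2 hJ
    fun x hx => hP.pair_self_pos (hJP hx)
  set S := {v ∈ V | (perp B P v ∩ J).Nonempty}
  have hSbdd : Bornology.IsBounded S := by
    refine (Metric.isBounded_closedBall (x := 0) (r := √(c / m))).subset ?_
    rintro v ⟨hvV, x, ⟨-, hxv⟩, hxJ⟩
    rw [mem_closedBall_zero_iff]
    refine Real.le_sqrt_of_sq_le ((le_div_iff₀ hm).2 ?_)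
    linarith [hmJ x hxJ v hxv, hc v hvV]
  refine ((finite_of_isBounded_of_isDual hdet hSbdd fun v hv => (hV v hv.1).1).image
    (perp B P)).subset ?_
  rintro H ⟨v, hv, rfl, hne⟩
  exact ⟨v, ⟨hv, hne⟩, rfl⟩

end K3Aut
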